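/- arXiv:1502.02623 — 2 statements merged into one kernel-verified Lean document; each statement's English description precedes it below -/
import Mathlib

section
/- Let Π = (P, 𝓛) be a finite projective plane of order n, let m ≥ 1, and let v : P → ℤ/mℤ be a line-invariant function. Then the image of v has at most gcd(n, m) elements. -/
/-!
Counting the lines through a point `x` of a projective plane of order `n`, each point `y ≠ x`
lies on exactly one of them and `x` on all `n + 1`, so the line sums through `x` add up to
`n • v x + ∑ y, v y`. When all line sums equal `s` this is `(n + 1) • s`, hence `n • v x` does
not depend on `x`: the differences `v x - v x₀` are `n`-torsion in `ℤ/mℤ`, and a cyclic group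
of order `m` has at most `gcd(n, m)` elements killed by `n`.
-/

open Configuration

/-- The sum of `v` over the points of the line `l`. -/
noncomputable def lineSum {P L G : Type*} [Membership P L] [AddCommMonoid G]
    (v : P → G) (l : L) : G :=
  ∑ᶠ x ∈ {x : P | x ∈ l}, v x

/-- `v : P → G` is line invariant if its sum along every line of `L` is the same. -/
def LineInvariant (P L : Type*) {G : Type*} [Membership P L] [AddCommMonoid G]
    (v : P → G) : Prop :=
  ∀ l l' : L, lineSum v l = lineSum v l'

section Counting

variable {P L G : Type*} [Membership P L] [AddCommMonoid G]

open Classical in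
lemma lineSum_eq_sum_filter [Fintype P] (v : P → G) (l : L) :
    lineSum v l = ∑ x ∈ Finset.univ.filter (· ∈ l), v x := by
  rw [lineSum, ← finsum_mem_coe_finset]
  simp

open Classical in
lemma card_filter_mem_and_mem_of_ne [Fintype L] [HasLines P L] {x y : P} (hxy : x ≠ y) :
    (Finset.univ.filter fun l : L => x ∈ l ∧ y ∈ l).card = 1 := by
  obtain ⟨l, hl, hl_unique⟩ := HasLines.existsUnique_line P L x y hxy
  exact Finset.card_eq_one.mpr ⟨l, Finset.ext fun l' => by simpa using ⟨hl_unique l', (· ▸ hl)⟩⟩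

open Classical in
lemma ProjectivePlane.card_filter_mem [Fintype P] [Fintype L] [ProjectivePlane P L] (x : P) :
    (Finset.univ.filter fun l : L => x ∈ l).card = ProjectivePlane.order P L + 1 := by
  rw [← ProjectivePlane.lineCount_eq (L := L) x, lineCount, Nat.card_eq_fintype_card,
    Fintype.card_subtype]

open Classical in
lemma ProjectivePlane.sum_lineSum_lines_through [Fintype P] [Fintype L] [ProjectivePlane P L]
    (v : P → G) (x : P) :
    ∑ l ∈ Finset.univ.filter (x ∈ · : L → Prop), lineSum v l
      = ProjectivePlane.order P L • v x + ∑ y, v y := by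
  have h_swap : ∑ l ∈ Finset.univ.filter (x ∈ · : L → Prop), lineSum v l
      = ∑ y, (Finset.univ.filter fun l : L => x ∈ l ∧ y ∈ l).card • v y := by
    simp_rw [lineSum_eq_sum_filter (v := v), Finset.sum_filter (s := Finset.univ) (p := (· ∈ _))]
    rw [Finset.sum_comm]
    simp_rw [← Finset.sum_filter, Finset.filter_filter, Finset.sum_const]
  have h_other : ∀ y ∈ Finset.univ.erase x,
      (Finset.univ.filter fun l : L => x ∈ l ∧ y ∈ l).card • v y = v y := fun y hy => by
    rw [card_filter_mem_and_mem_of_ne (Finset.ne_of_mem_erase hy).symm, one_smul]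
  rw [h_swap, ← Finset.add_sum_erase _ _ (Finset.mem_univ x), Finset.sum_congr rfl h_other]
  simp_rw [and_self, card_filter_mem, succ_nsmul, add_assoc, Finset.add_sum_erase _ _
    (Finset.mem_univ x)]

end Counting

lemma LineInvariant.order_nsmul_eq {P L G : Type*} [Membership P L] [Fintype P] [Fintype L]
    [ProjectivePlane P L] [AddCancelCommMonoid G] {v : P → G} (hv : LineInvariant P L v)
    (x y : P) : ProjectivePlane.order P L • v x = ProjectivePlane.order P L • v y := by
  obtain ⟨-, -, -, l₀, -⟩ := @ProjectivePlane.exists_config P L _ _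
  have h_total : ∀ z : P, ProjectivePlane.order P L • v z + ∑ w, v w
      = (ProjectivePlane.order P L + 1) • lineSum v l₀ := fun z => by
    rw [← ProjectivePlane.sum_lineSum_lines_through, Finset.sum_congr rfl fun l _ => hv l l₀,
      Finset.sum_const, ProjectivePlane.card_filter_mem]
  exact add_right_cancel ((h_total x).trans (h_total y).symm)

lemma ncard_range_le_ncard_nsmul_eq_zero {ι G : Type*} [AddCommGroup G] [Finite G] {v : ι → G}
    {n : ℕ} (hv : ∀ x y, n • v x = n • v y) :
    (Set.range v).ncard ≤ {z : G | n • z = 0}.ncard := by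
  rcases isEmpty_or_nonempty ι with _ | ⟨⟨x₀⟩⟩
  · simp [Set.range_eq_empty]
  refine Set.ncard_le_ncard_of_injOn (· - v x₀) ?_ (sub_left_injective.injOn)
  rintro _ ⟨x, rfl⟩
  simp [nsmul_sub, hv x x₀]

lemma IsAddCyclic.ncard_nsmul_eq_zero_le_gcd {G : Type*} [AddGroup G] [Fintype G]
    [IsAddCyclic G] (n : ℕ) :
    {z : G | n • z = 0}.ncard ≤ n.gcd (Fintype.card G) := by
  classical
  have h_gcd (z : G) : n • z = 0 ↔ n.gcd (Fintype.card G) • z = 0 := by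
    rw [gcd_nsmul_eq_zero, and_iff_left card_nsmul_eq_zero]
  simp_rw [h_gcd, Set.ncard_eq_toFinset_card', Set.toFinset_ofPred]
  exact IsAddCyclic.card_nsmul_eq_zero_le (Nat.gcd_pos_of_pos_right n Fintype.card_pos)

/-- Any line-invariant `v : P → ℤ/mℤ` on a projective plane of order `n` takes at most
`gcd(n, m)` distinct values. -/
theorem stmt_7 {P L : Type*} [Membership P L] [Fintype P] [Fintype L]
    [ProjectivePlane P L] {n : ℕ} (hn : ProjectivePlane.order P L = n)
    (m : ℕ) (hm : 1 ≤ m) (v : P → ZMod m) (hv : LineInvariant P L v) :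
    (Set.range v).ncard ≤ Nat.gcd n m := by
  have : NeZero m := ⟨by omega⟩
  calc (Set.range v).ncard ≤ {z : ZMod m | n • z = 0}.ncard :=
        ncard_range_le_ncard_nsmul_eq_zero (hn ▸ hv.order_nsmul_eq)
    _ ≤ n.gcd (Fintype.card (ZMod m)) := IsAddCyclic.ncard_nsmul_eq_zero_le_gcd n
    _ = n.gcd m := by rw [ZMod.card]
end

section
/- Every finite projective plane Π = (P, 𝓛) of order n ≥ 2 is magic over the group (ℤ/nℤ)³: there exists an injective line-invariant function v : P → (ℤ/nℤ)³. -/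
open Configuration

/-!
For any `H : L → G`, the point function `x ↦ ∑_{l ∋ x} H l` has sum `∑_l #(l ∩ m) • H l` along
a line `m`; two distinct lines meet once and `m` has `n + 1` points, so when `n • G = 0` this is
`∑_l H l` for every `m`. It remains to choose `H` with values in `(ℤ/nℤ)³` making the point
function injective.

Take a triangle with vertices `q₀, q₁, q₂` and sides `sᵢ = qᵢqᵢ₊₁`. Label the `n - 1` lines
through `qᵢ` that are not sides bijectively by the nonzero residues, put that label into
coordinate `i`, and give the side `sᵢ` the weight `eᵢ - c • eᵢ₋₁`. A point off the triangle gets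
the labels of its lines to the three vertices: all nonzero, and two of them determine the point.
A point of `sᵢ` other than a vertex gets `1, 0` in coordinates `i, i + 1` and the label of its
line to `qᵢ₊₂` (minus `c`) in coordinate `i + 2`; the vertex `qᵢ` gets `-c, 1 - c` in coordinates
`i + 1, i + 2`. With `c = 1` these patterns are pairwise incompatible as soon as `2 ≠ 0` in `ℤ/nℤ`.
For `n = 2` one takes `c = 0` instead; then `qᵢ` is told apart from the other points of `sᵢ` by
its coordinate `i`, which is `1 + ∑ t = 0`.
-/

open ProjectivePlane Finset
open scoped Classical

section PencilSum

variable {P L G : Type*} [Membership P L] [AddCommMonoid G]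

noncomputable def pencilSum [Fintype L] (H : L → G) (x : P) : G :=
  ∑ l with x ∈ l, H l

lemma lineSum_eq_sum [Fintype P] (v : P → G) (l : L) :
    lineSum v l = ∑ x with x ∈ l, v x := by
  rw [lineSum, finsum_mem_eq_toFinset_sum, Set.toFinset_ofPred]

variable [Fintype P] [Fintype L] [ProjectivePlane P L]

lemma card_inter_nsmul (hG : ∀ g : G, order P L • g = 0) (l m : L) (g : G) :
    #{x : P | x ∈ m ∧ x ∈ l} • g = g := by
  by_cases h : l = m
  · subst h
    have : #{x : P | x ∈ l ∧ x ∈ l} = order P L + 1 := by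
      rw [← pointCount_eq P l, pointCount, Nat.card_eq_fintype_card, Fintype.card_subtype]
      simp
    rw [this, succ_nsmul, hG, zero_add]
  · obtain ⟨p, hp, hu⟩ := HasPoints.existsUnique_point P L m l (Ne.symm h)
    rw [card_eq_one.mpr ⟨p, by ext x; simpa using ⟨fun hx => hu x hx, fun hx => hx ▸ hp⟩⟩,
      one_nsmul]

lemma lineSum_pencilSum (hG : ∀ g : G, order P L • g = 0) (H : L → G) (m : L) :
    lineSum (pencilSum (P := P) H) m = ∑ l, H l :=
  calc lineSum (pencilSum (P := P) H) m
      = ∑ x with x ∈ m, ∑ l with x ∈ l, H l := by rw [lineSum_eq_sum]; rfl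
    _ = ∑ l, ∑ x with x ∈ m ∧ x ∈ l, H l := sum_comm' (by simp)
    _ = ∑ l, #{x : P | x ∈ m ∧ x ∈ l} • H l := by simp only [sum_const]
    _ = ∑ l, H l := by simp only [card_inter_nsmul hG]

lemma lineInvariant_pencilSum (hG : ∀ g : G, order P L • g = 0) (H : L → G) :
    LineInvariant P L (pencilSum H) := fun l l' => by
  rw [lineSum_pencilSum hG, lineSum_pencilSum hG]

end PencilSum

lemma Fin.eq_or_eq_add_one_or_eq_add_two (i k : Fin 3) : k = i ∨ k = i + 1 ∨ k = i + 2 := by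
  fin_cases i <;> fin_cases k <;> decide

structure Triangle (P L : Type*) [Membership P L] where
  vertex : Fin 3 → P
  side : Fin 3 → L
  vertex_mem_side : ∀ i, vertex i ∈ side i
  vertex_add_one_mem_side : ∀ i, vertex (i + 1) ∈ side i
  vertex_add_two_notMem_side : ∀ i, vertex (i + 2) ∉ side i

namespace Triangle

variable {P L : Type*} [Membership P L] (T : Triangle P L)

lemma vertex_mem_side_add_two (i : Fin 3) : T.vertex i ∈ T.side (i + 2) := by
  simpa [add_assoc] using T.vertex_add_one_mem_side (i + 2)

lemma vertex_notMem_side_add_one (i : Fin 3) : T.vertex i ∉ T.side (i + 1) := by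
  simpa [add_assoc] using T.vertex_add_two_notMem_side (i + 1)

lemma vertex_mem_side_iff (i k : Fin 3) : T.vertex i ∈ T.side k ↔ k = i ∨ k = i + 2 := by
  rcases Fin.eq_or_eq_add_one_or_eq_add_two i k with rfl | rfl | rfl
  · simp [T.vertex_mem_side]
  · simp [T.vertex_notMem_side_add_one]
  · simp [T.vertex_mem_side_add_two]

lemma side_injective : Function.Injective T.side := by
  intro j k h
  have h' : ∀ i, (j = i ∨ j = i + 2) ↔ (k = i ∨ k = i + 2) := fun i => by
    rw [← T.vertex_mem_side_iff, ← T.vertex_mem_side_iff, h]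
  revert h'
  fin_cases j <;> fin_cases k <;> decide

lemma vertex_injective : Function.Injective T.vertex := by
  intro j k h
  have h' : ∀ i, (i = j ∨ i = j + 2) ↔ (i = k ∨ i = k + 2) := fun i => by
    rw [← T.vertex_mem_side_iff, ← T.vertex_mem_side_iff, h]
  revert h'
  fin_cases j <;> fin_cases k <;> decide

def IsOrdinary (i : Fin 3) (l : L) : Prop := T.vertex i ∈ l ∧ ∀ k, l ≠ T.side k

lemma isOrdinary_iff {i : Fin 3} {l : L} :
    T.IsOrdinary i l ↔ T.vertex i ∈ l ∧ l ≠ T.side i ∧ l ≠ T.side (i + 2) := by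
  refine ⟨fun ⟨hl, hs⟩ => ⟨hl, hs _, hs _⟩, fun ⟨hl, h₀, h₂⟩ => ⟨hl, fun k hk => ?_⟩⟩
  rcases (T.vertex_mem_side_iff i k).1 (hk ▸ hl) with rfl | rfl <;> simp_all

structure Labelling (n : ℕ) where
  label : Fin 3 → L → ZMod n
  label_of_not_isOrdinary : ∀ i l, ¬ T.IsOrdinary i l → label i l = 0
  bijOn_label : ∀ i, Set.BijOn (label i) {l | T.IsOrdinary i l} {t | t ≠ 0}

section ProjectivePlane

variable [ProjectivePlane P L]

lemma eq_vertex_of_mem_side_of_mem_side_add_one {x : P} {i : Fin 3} (hx : x ∈ T.side i)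
    (hx' : x ∈ T.side (i + 1)) : x = T.vertex (i + 1) :=
  (Nondegenerate.eq_or_eq hx (T.vertex_add_one_mem_side i) hx'
    (T.vertex_mem_side (i + 1))).resolve_right (T.side_injective.ne (by simp))

lemma mem_side_cases (x : P) : (∀ k, x ∉ T.side k) ∨ (∃ i, x = T.vertex i) ∨
    ∃ i, x ∈ T.side i ∧ x ∉ T.side (i + 1) ∧ x ∉ T.side (i + 2) := by
  by_cases h : ∃ i, x ∈ T.side i
  · obtain ⟨i, hi⟩ := h
    by_cases h₁ : x ∈ T.side (i + 1)
    · exact Or.inr (Or.inl ⟨i + 1, T.eq_vertex_of_mem_side_of_mem_side_add_one hi h₁⟩)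
    by_cases h₂ : x ∈ T.side (i + 2)
    · refine Or.inr (Or.inl ⟨i, ?_⟩)
      simpa [add_assoc] using T.eq_vertex_of_mem_side_of_mem_side_add_one h₂ (by simpa [add_assoc])
    exact Or.inr (Or.inr ⟨i, hi, h₁, h₂⟩)
  · exact Or.inl fun k hk => h ⟨k, hk⟩

variable [Fintype P] [Fintype L] {n : ℕ}

lemma card_isOrdinary (hn : order P L = n) (i : Fin 3) : #{l | T.IsOrdinary i l} = n - 1 := by
  have hfilter : ({l | T.IsOrdinary i l} : Finset L) =
      (({l | T.vertex i ∈ l} : Finset L).erase (T.side i)).erase (T.side (i + 2)) := by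
    ext l
    simp only [T.isOrdinary_iff, mem_erase, mem_filter, mem_univ, true_and]
    tauto
  have hcount : #({l | T.vertex i ∈ l} : Finset L) = n + 1 := by
    rw [← hn, ← lineCount_eq L (T.vertex i), lineCount, Nat.card_eq_fintype_card,
      Fintype.card_subtype]
  rw [hfilter, card_erase_of_mem, card_erase_of_mem, hcount]
  · simp
  · simp [T.vertex_mem_side]
  · simp [T.vertex_mem_side_add_two, T.side_injective.ne (show i + 2 ≠ i by simp)]

lemma nonempty_labelling [NeZero n] (hn : order P L = n) : Nonempty (T.Labelling n) := by
  have hcard (i : Fin 3) :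
      Fintype.card {l // T.IsOrdinary i l} = Fintype.card {t : ZMod n // t ≠ 0} := by
    rw [Fintype.card_subtype, Fintype.card_subtype, T.card_isOrdinary hn, filter_ne',
      card_erase_of_mem (mem_univ _), card_univ, ZMod.card]
  let e (i : Fin 3) := Fintype.equivOfCardEq (hcard i)
  refine ⟨⟨fun i l => if h : T.IsOrdinary i l then e i ⟨l, h⟩ else 0, fun i l h => dif_neg h,
    fun i => ⟨fun l (hl : T.IsOrdinary i l) => by simp [dif_pos hl],
      fun l (hl : T.IsOrdinary i l) l' (hl' : T.IsOrdinary i l') h => ?_,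
      fun t ht => ⟨(e i |>.symm ⟨t, ht⟩).1, (e i |>.symm ⟨t, ht⟩).2,
        by simp [dif_pos (e i |>.symm ⟨t, ht⟩).2]⟩⟩⟩⟩
  simp only [dif_pos hl, dif_pos hl'] at h
  exact congrArg Subtype.val ((e i).injective (Subtype.ext h))

end ProjectivePlane

lemma nonempty [ProjectivePlane P L] : Nonempty (Triangle P L) := by
  obtain ⟨p₁, p₂, p₃, -, l₂, l₃, hp₁l₂, -, -, hp₂l₂, hp₂l₃, -, hp₃l₂, hp₃l₃⟩ :=
    ProjectivePlane.exists_config (P := P) (L := L)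
  have h₂₃ : p₂ ≠ p₃ := fun h => hp₃l₃ (h ▸ hp₂l₃)
  have h₃₁ : p₃ ≠ p₁ := fun h => hp₁l₂ (h ▸ hp₃l₂)
  have h₁₂ : p₁ ≠ p₂ := fun h => hp₁l₂ (h ▸ hp₂l₂)
  have hl₂ (l : L) (h₂ : p₂ ∈ l) (h₃ : p₃ ∈ l) : p₁ ∉ l :=
    (Nondegenerate.eq_or_eq h₂ h₃ hp₂l₂ hp₃l₂).resolve_left h₂₃ ▸ hp₁l₂
  obtain ⟨hp₃m, hp₁m⟩ := HasLines.mkLine_ax (L := L) h₃₁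
  obtain ⟨hp₁m', hp₂m'⟩ := HasLines.mkLine_ax (L := L) h₁₂
  have hp₂m : p₂ ∉ HasLines.mkLine h₃₁ := fun h => hl₂ _ h hp₃m hp₁m
  have hp₃m' : p₃ ∉ HasLines.mkLine h₁₂ := fun h => hl₂ _ hp₂m' h hp₁m'
  refine ⟨⟨![p₂, p₃, p₁], ![l₂, HasLines.mkLine h₃₁, HasLines.mkLine h₁₂], ?_, ?_, ?_⟩⟩ <;>
    intro i <;> fin_cases i <;> simp [*]

namespace Labelling

variable {T} {n : ℕ} (Λ : T.Labelling n)

lemma isOrdinary_of_label_ne_zero {i : Fin 3} {l : L} (h : Λ.label i l ≠ 0) :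
    T.IsOrdinary i l :=
  not_not.1 (mt (Λ.label_of_not_isOrdinary i l) h)

noncomputable def weight (c : ZMod n) (l : L) : Fin 3 → ZMod n := fun j =>
  Λ.label j l + (if l = T.side j then 1 else 0) - c * (if l = T.side (j + 1) then 1 else 0)

section Fintype

variable [Fintype L]

lemma sum_label [NeZero n] (i : Fin 3) : ∑ l, Λ.label i l = ∑ t : ZMod n, t := by
  rw [← sum_filter_of_ne fun l _ h => Λ.isOrdinary_of_label_ne_zero h,
    ← sum_filter_ne_zero (s := univ)]
  refine sum_nbij (Λ.label i) (fun l hl => ?_) ?_ ?_ fun _ _ => rfl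
  · simpa using (Λ.bijOn_label i).mapsTo (by simpa using hl)
  · simpa using (Λ.bijOn_label i).injOn
  · simpa using (Λ.bijOn_label i).surjOn

lemma pencilSum_label_vertex (i : Fin 3) :
    pencilSum (Λ.label i) (T.vertex i) = ∑ l, Λ.label i l :=
  sum_filter_of_ne fun _ _ h => (Λ.isOrdinary_of_label_ne_zero h).1

lemma pencilSum_weight_apply (c : ZMod n) (x : P) (j : Fin 3) :
    pencilSum (Λ.weight c) x j = pencilSum (Λ.label j) x + (if x ∈ T.side j then 1 else 0) -
      c * (if x ∈ T.side (j + 1) then 1 else 0) := by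
  simp [pencilSum, weight, Finset.sum_apply, sum_add_distrib, sum_sub_distrib]

variable [ProjectivePlane P L]

lemma pencilSum_label_eq_zero {i k : Fin 3} {x : P} (hxk : x ∈ T.side k)
    (hik : T.vertex i ∈ T.side k) (hxi : x ≠ T.vertex i) : pencilSum (Λ.label i) x = 0 :=
  sum_eq_zero fun l hl => by
    by_contra h
    obtain ⟨hil, hls⟩ := Λ.isOrdinary_of_label_ne_zero h
    exact hls k ((Nondegenerate.eq_or_eq (mem_filter.1 hl).2 hil hxk hik).resolve_left hxi)

lemma exists_pencilSum_label_eq {i : Fin 3} {x : P} (hx : x ∉ T.side i)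
    (hx' : x ∉ T.side (i + 2)) :
    ∃ l, T.IsOrdinary i l ∧ x ∈ l ∧ pencilSum (Λ.label i) x = Λ.label i l := by
  have hxi : x ≠ T.vertex i := fun h => hx (h ▸ T.vertex_mem_side i)
  obtain ⟨hxl, hil⟩ := HasLines.mkLine_ax (L := L) hxi
  refine ⟨HasLines.mkLine hxi, T.isOrdinary_iff.2 ⟨hil, fun h => hx (h ▸ hxl),
    fun h => hx' (h ▸ hxl)⟩, hxl,
    sum_eq_single_of_mem _ (mem_filter.2 ⟨mem_univ _, hxl⟩) fun l hl hne => ?_⟩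
  by_contra h
  exact hne ((Nondegenerate.eq_or_eq (mem_filter.1 hl).2
    (Λ.isOrdinary_of_label_ne_zero h).1 hxl hil).resolve_left hxi)

lemma pencilSum_label_ne_zero {i : Fin 3} {x : P} (hx : x ∉ T.side i)
    (hx' : x ∉ T.side (i + 2)) : pencilSum (Λ.label i) x ≠ 0 := by
  obtain ⟨l, hl, -, h⟩ := Λ.exists_pencilSum_label_eq hx hx'
  exact h ▸ (Λ.bijOn_label i).mapsTo hl

lemma exists_isOrdinary_of_pencilSum_label_eq {i : Fin 3} {x y : P} (hx : x ∉ T.side i)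
    (hx' : x ∉ T.side (i + 2)) (hy : y ∉ T.side i) (hy' : y ∉ T.side (i + 2))
    (h : pencilSum (Λ.label i) x = pencilSum (Λ.label i) y) :
    ∃ l, T.IsOrdinary i l ∧ x ∈ l ∧ y ∈ l := by
  obtain ⟨l, hl, hxl, hx⟩ := Λ.exists_pencilSum_label_eq hx hx'
  obtain ⟨l', hl', hyl', hy⟩ := Λ.exists_pencilSum_label_eq hy hy'
  exact ⟨l, hl, hxl, (Λ.bijOn_label i).injOn hl hl' (hx ▸ hy ▸ h) ▸ hyl'⟩

variable (c : ZMod n)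

lemma pencilSum_weight_vertex (i : Fin 3) :
    pencilSum (Λ.weight c) (T.vertex i) i = ∑ l, Λ.label i l + 1 ∧
    pencilSum (Λ.weight c) (T.vertex i) (i + 1) = -c ∧
    pencilSum (Λ.weight c) (T.vertex i) (i + 2) = 1 - c := by
  have h₁ : T.vertex i ≠ T.vertex (i + 1) := T.vertex_injective.ne (by simp)
  have h₂ : T.vertex i ≠ T.vertex (i + 2) := T.vertex_injective.ne (by simp)
  simp only [pencilSum_weight_apply, Λ.pencilSum_label_vertex,
    Λ.pencilSum_label_eq_zero (T.vertex_mem_side i) (T.vertex_add_one_mem_side i) h₁,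
    Λ.pencilSum_label_eq_zero (T.vertex_mem_side_add_two i) (T.vertex_mem_side (i + 2)) h₂,
    add_assoc]
  simp [T.vertex_mem_side, T.vertex_notMem_side_add_one, T.vertex_mem_side_add_two]

lemma pencilSum_weight_of_mem_side {i : Fin 3} {x : P} (hx : x ∈ T.side i)
    (hx₁ : x ∉ T.side (i + 1)) (hx₂ : x ∉ T.side (i + 2)) :
    pencilSum (Λ.weight c) x i = 1 ∧ pencilSum (Λ.weight c) x (i + 1) = 0 ∧
    pencilSum (Λ.weight c) x (i + 2) + c ≠ 0 := by
  have h₀ : x ≠ T.vertex i := fun h => hx₂ (h ▸ T.vertex_mem_side_add_two i)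
  have h₁ : x ≠ T.vertex (i + 1) := fun h => hx₁ (h ▸ T.vertex_mem_side (i + 1))
  have := Λ.pencilSum_label_ne_zero hx₂ (by simpa [add_assoc] using hx₁)
  simp only [pencilSum_weight_apply, hx, hx₁, add_assoc,
    Λ.pencilSum_label_eq_zero hx (T.vertex_mem_side i) h₀,
    Λ.pencilSum_label_eq_zero hx (T.vertex_add_one_mem_side i) h₁]
  simpa [hx, hx₂]

lemma pencilSum_weight_ne_zero {x : P} (hx : ∀ k, x ∉ T.side k) (j : Fin 3) :
    pencilSum (Λ.weight c) x j ≠ 0 := by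
  simpa [pencilSum_weight_apply, hx] using Λ.pencilSum_label_ne_zero (hx j) (hx (j + 2))

lemma exists_pencilSum_weight_vertex_eq_zero (hc : c = 0 ∨ c = 1) (i : Fin 3) :
    ∃ k, pencilSum (Λ.weight c) (T.vertex i) k = 0 := by
  obtain ⟨-, h₁, h₂⟩ := Λ.pencilSum_weight_vertex c i
  rcases hc with rfl | rfl
  · exact ⟨i + 1, by simpa using h₁⟩
  · exact ⟨i + 2, by simpa using h₂⟩

lemma eq_of_pencilSum_weight_eq_of_forall_notMem {x y : P} (hx : ∀ k, x ∉ T.side k)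
    (hy : ∀ k, y ∉ T.side k) (h : pencilSum (Λ.weight c) x = pencilSum (Λ.weight c) y) :
    x = y := by
  have hcoord (j : Fin 3) : pencilSum (Λ.label j) x = pencilSum (Λ.label j) y := by
    simpa [pencilSum_weight_apply, hx, hy] using congrFun h j
  obtain ⟨l, hl, hxl, hyl⟩ :=
    Λ.exists_isOrdinary_of_pencilSum_label_eq (hx 0) (hx 2) (hy 0) (hy 2) (hcoord 0)
  obtain ⟨l', hl', hxl', hyl'⟩ :=
    Λ.exists_isOrdinary_of_pencilSum_label_eq (hx 1) (hx 0) (hy 1) (hy 0) (hcoord 1)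
  by_contra hxy
  have hll' : l = l' := (Nondegenerate.eq_or_eq hxl hyl hxl' hyl').resolve_left hxy
  exact hl.2 0 ((Nondegenerate.eq_or_eq hl.1 (hll' ▸ hl'.1) (T.vertex_mem_side 0)
    (T.vertex_add_one_mem_side 0)).resolve_left (T.vertex_injective.ne (by decide)))

lemma eq_of_pencilSum_weight_eq_of_mem_side {i : Fin 3} {x y : P} (hx : x ∈ T.side i)
    (hx₁ : x ∉ T.side (i + 1)) (hx₂ : x ∉ T.side (i + 2)) (hy : y ∈ T.side i)
    (hy₁ : y ∉ T.side (i + 1)) (hy₂ : y ∉ T.side (i + 2))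
    (h : pencilSum (Λ.weight c) x = pencilSum (Λ.weight c) y) : x = y := by
  have hcoord : pencilSum (Λ.label (i + 2)) x = pencilSum (Λ.label (i + 2)) y := by
    simpa [pencilSum_weight_apply, add_assoc, hx, hx₂, hy, hy₂] using congrFun h (i + 2)
  obtain ⟨l, hl, hxl, hyl⟩ := Λ.exists_isOrdinary_of_pencilSum_label_eq hx₂
    (by simpa [add_assoc] using hx₁) hy₂ (by simpa [add_assoc] using hy₁) hcoord
  by_contra hxy
  exact hl.2 i ((Nondegenerate.eq_or_eq hxl hyl hx hy).resolve_left hxy)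

lemma pencilSum_weight_vertex_ne_of_forall_notMem (hc : c = 0 ∨ c = 1) (i : Fin 3) {x : P}
    (hx : ∀ k, x ∉ T.side k) :
    pencilSum (Λ.weight c) (T.vertex i) ≠ pencilSum (Λ.weight c) x := fun h => by
  obtain ⟨k, hk⟩ := Λ.exists_pencilSum_weight_vertex_eq_zero c hc i
  exact Λ.pencilSum_weight_ne_zero c hx k (h ▸ hk)

lemma pencilSum_weight_ne_of_mem_side_of_forall_notMem {i : Fin 3} {x y : P}
    (hx : x ∈ T.side i) (hx₁ : x ∉ T.side (i + 1)) (hx₂ : x ∉ T.side (i + 2))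
    (hy : ∀ k, y ∉ T.side k) : pencilSum (Λ.weight c) x ≠ pencilSum (Λ.weight c) y := fun h =>
  Λ.pencilSum_weight_ne_zero c hy (i + 1) (h ▸ (Λ.pencilSum_weight_of_mem_side c hx hx₁ hx₂).2.1)

variable [Nontrivial (ZMod n)]

lemma vertex_eq_of_pencilSum_weight_eq {i j : Fin 3}
    (h : pencilSum (Λ.weight c) (T.vertex i) = pencilSum (Λ.weight c) (T.vertex j)) :
    i = j := by
  obtain ⟨-, hi₁, hi₂⟩ := Λ.pencilSum_weight_vertex c i
  obtain ⟨-, hj₁, hj₂⟩ := Λ.pencilSum_weight_vertex c j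
  rw [← h] at hj₁ hj₂
  rcases Fin.eq_or_eq_add_one_or_eq_add_two i j with rfl | rfl | rfl
  · rfl
  · simp only [add_assoc, Fin.reduceAdd] at hj₁
    exact absurd (by linear_combination hj₁ - hi₂) one_ne_zero
  · simp only [add_assoc, Fin.reduceAdd] at hj₂
    exact absurd (by linear_combination hi₁ - hj₂) one_ne_zero

lemma side_eq_of_pencilSum_weight_eq {i j : Fin 3} {x y : P} (hx : x ∈ T.side i)
    (hx₁ : x ∉ T.side (i + 1)) (hx₂ : x ∉ T.side (i + 2)) (hy : y ∈ T.side j)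
    (hy₁ : y ∉ T.side (j + 1)) (hy₂ : y ∉ T.side (j + 2))
    (h : pencilSum (Λ.weight c) x = pencilSum (Λ.weight c) y) : i = j := by
  obtain ⟨hx₀, hx₁, -⟩ := Λ.pencilSum_weight_of_mem_side c hx hx₁ hx₂
  obtain ⟨hy₀, hy₁, -⟩ := Λ.pencilSum_weight_of_mem_side c hy hy₁ hy₂
  rw [← h] at hy₀ hy₁
  rcases Fin.eq_or_eq_add_one_or_eq_add_two i j with rfl | rfl | rfl
  · rfl
  · exact absurd (by linear_combination hx₁ - hy₀) one_ne_zero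
  · simp only [add_assoc, Fin.reduceAdd, add_zero] at hy₁
    exact absurd (by linear_combination hy₁ - hx₀) one_ne_zero

lemma pencilSum_weight_vertex_ne_of_mem_side
    (hc : c = 1 ∧ (2 : ZMod n) ≠ 0 ∨ c = 0 ∧ ∀ i, ∑ l, Λ.label i l ≠ 0) {i j : Fin 3} {y : P}
    (hy : y ∈ T.side j) (hy₁ : y ∉ T.side (j + 1)) (hy₂ : y ∉ T.side (j + 2)) :
    pencilSum (Λ.weight c) (T.vertex i) ≠ pencilSum (Λ.weight c) y := by
  intro h
  obtain ⟨hx₀, hx₁, -⟩ := Λ.pencilSum_weight_vertex c i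
  obtain ⟨hy₀, hy₁, hy₂⟩ := Λ.pencilSum_weight_of_mem_side c hy hy₁ hy₂
  rw [← h] at hy₀ hy₁ hy₂
  rcases Fin.eq_or_eq_add_one_or_eq_add_two i j with rfl | rfl | rfl
  · rcases hc with ⟨rfl, -⟩ | ⟨rfl, hS⟩
    · exact absurd (by linear_combination hx₁ - hy₁) one_ne_zero
    · exact hS _ (by linear_combination hy₀ - hx₀)
  · rcases hc with ⟨rfl, h₂⟩ | ⟨rfl, -⟩
    · exact h₂ (by linear_combination hx₁ - hy₀)
    · exact absurd (by linear_combination hx₁ - hy₀) one_ne_zero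
  · simp only [add_assoc, Fin.reduceAdd] at hy₂
    exact hy₂ (by linear_combination hx₁)

theorem injective_pencilSum_weight
    (hc : c = 1 ∧ (2 : ZMod n) ≠ 0 ∨ c = 0 ∧ ∀ i, ∑ l, Λ.label i l ≠ 0) :
    Function.Injective (pencilSum (Λ.weight c) : P → Fin 3 → ZMod n) := by
  have hc' : c = 0 ∨ c = 1 := hc.symm.imp (·.1) (·.1)
  intro x y h
  rcases T.mem_side_cases x with hx | ⟨i, rfl⟩ | ⟨i, hx, hx₁, hx₂⟩ <;>
    rcases T.mem_side_cases y with hy | ⟨j, rfl⟩ | ⟨j, hy, hy₁, hy₂⟩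
  · exact Λ.eq_of_pencilSum_weight_eq_of_forall_notMem c hx hy h
  · exact absurd h.symm (Λ.pencilSum_weight_vertex_ne_of_forall_notMem c hc' j hx)
  · exact absurd h.symm (Λ.pencilSum_weight_ne_of_mem_side_of_forall_notMem c hy hy₁ hy₂ hx)
  · exact absurd h (Λ.pencilSum_weight_vertex_ne_of_forall_notMem c hc' i hy)
  · rw [Λ.vertex_eq_of_pencilSum_weight_eq c h]
  · exact absurd h (Λ.pencilSum_weight_vertex_ne_of_mem_side c hc hy hy₁ hy₂)
  · exact absurd h (Λ.pencilSum_weight_ne_of_mem_side_of_forall_notMem c hx hx₁ hx₂ hy)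
  · exact absurd h.symm (Λ.pencilSum_weight_vertex_ne_of_mem_side c hc hx hx₁ hx₂)
  · obtain rfl := Λ.side_eq_of_pencilSum_weight_eq c hx hx₁ hx₂ hy hy₁ hy₂ h
    exact Λ.eq_of_pencilSum_weight_eq_of_mem_side c hx hx₁ hx₂ hy hy₁ hy₂ h

end Fintype

end Labelling

end Triangle

/-- Every finite projective plane of order `n ≥ 2` is magic over `(ℤ/nℤ)³`. -/
theorem stmt_13 {P L : Type*} [Membership P L] [Fintype P] [Fintype L]
    [ProjectivePlane P L] {n : ℕ} (hn : ProjectivePlane.order P L = n) (h2 : 2 ≤ n) :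
    ∃ v : P → (Fin 3 → ZMod n), Function.Injective v ∧ LineInvariant P L v := by
  have : Fact (1 < n) := ⟨h2⟩
  have : NeZero n := ⟨by omega⟩
  obtain ⟨T⟩ := Triangle.nonempty (P := P) (L := L)
  obtain ⟨Λ⟩ := T.nonempty_labelling hn
  obtain ⟨c, hc⟩ : ∃ c : ZMod n,
      c = 1 ∧ (2 : ZMod n) ≠ 0 ∨ c = 0 ∧ ∀ i, ∑ l, Λ.label i l ≠ 0 := by
    rcases h2.eq_or_lt with rfl | h3
    -- `∑ t : ZMod 2, t` unfolds definitionally to `1`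
    · exact ⟨0, Or.inr ⟨rfl, fun i => by rw [Λ.sum_label]; exact one_ne_zero⟩⟩
    · refine ⟨1, Or.inl ⟨rfl, fun h => ?_⟩⟩
      have := Nat.le_of_dvd two_pos ((ZMod.natCast_eq_zero_iff 2 n).1 (by exact_mod_cast h))
      omega
  refine ⟨pencilSum (Λ.weight c), Λ.injective_pencilSum_weight c hc,
    lineInvariant_pencilSum (fun g => ?_) _⟩
  ext j
  simp [hn]
end
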